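/- For all x, y ∈ B², w_{B²}(x,y) ≤ p_{B²}(x,y) ≤ √2·w_{B²}(x,y). Equality w_{B²} = p_{B²} holds when x, y lie on the same ray from the origin, and p_{B²}(x,y) = √2·w_{B²}(x,y) holds for x = −y with |x| = 1/2. -/

import Mathlib

open Metric Set

/-- `x̃ = x(2−|x|)/|x|`. -/
noncomputable def tilde (x : ℂ) : ℂ := (((2 - norm x) / norm x : ℝ) : ℂ) * x

/-- The quasi-metric `w` of the unit disk. -/
noncomputable def wB (x y : ℂ) : ℝ :=
  if x = 0 then norm y / (2 - norm y)
  else if y = 0 then norm x / (2 - norm x)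
  else norm (x - y) / min (norm (x - tilde y)) (norm (y - tilde x))

/-- The point pair function of the unit disk. -/
noncomputable def pB (x y : ℂ) : ℝ :=
  norm (x - y) /
    Real.sqrt (norm (x - y) ^ 2 + 4 * (1 - norm x) * (1 - norm y))

/-!
Write `A = |x|`, `B = |y|`, `u = AB - ⟪x, y⟫ ∈ [0, 2AB]` and `S = |x-y|² + 4(1-A)(1-B)` for the
squared denominator of `p`. Then `S = (2-A-B)² + 2u` and, for `x ≠ 0`,
`|y - x̃|² = S + 4(1-A)u/A`. When `B ≤ A` the minimum in `w` is `|y - x̃|`, so `w ≤ p` is `u ≥ 0`,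
and `p ≤ √2 w` is `4(1-A)u/A ≤ S`, which follows from `u ≤ 2AB`. The first inequality is an
equality when `u = 0`, i.e. on a ray; the second one for `u = 2AB`, `A = B = 1/2`.
-/

open scoped RealInnerProductSpace

theorem norm_sub_sq_add_four_mul_pos {E : Type*} [SeminormedAddCommGroup E] {x y : E}
    (hx : ‖x‖ < 1) (hy : ‖y‖ < 1) :
    0 < ‖x - y‖ ^ 2 + 4 * (1 - ‖x‖) * (1 - ‖y‖) := by
  have := sub_pos.2 hx
  have := sub_pos.2 hy
  positivity

section InnerProductSpace

variable {E : Type*} [NormedAddCommGroup E] [InnerProductSpace ℝ E]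

theorem norm_sub_sq_add_four_mul_eq (x y : E) :
    ‖x - y‖ ^ 2 + 4 * (1 - ‖x‖) * (1 - ‖y‖) =
      (2 - ‖x‖ - ‖y‖) ^ 2 + 2 * (‖x‖ * ‖y‖ - ⟪x, y⟫) := by
  rw [norm_sub_sq_real]
  ring

theorem norm_sub_smul_sq_eq {x : E} (hx : x ≠ 0) (y : E) :
    ‖y - ((2 - ‖x‖) / ‖x‖) • x‖ ^ 2 =
      ‖x - y‖ ^ 2 + 4 * (1 - ‖x‖) * (1 - ‖y‖) + 4 * (1 - ‖x‖) / ‖x‖ * (‖x‖ * ‖y‖ - ⟪x, y⟫) := by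
  have hx' : ‖x‖ ≠ 0 := norm_ne_zero_iff.2 hx
  rw [norm_sub_sq_real, norm_sub_sq_real, inner_smul_right, norm_smul, Real.norm_eq_abs,
    mul_pow, sq_abs, real_inner_comm]
  field_simp
  ring

end InnerProductSpace

theorem tilde_eq_smul (x : ℂ) : tilde x = ((2 - ‖x‖) / ‖x‖) • x :=
  Complex.real_smul.symm

theorem norm_tilde {x : ℂ} (hx : x ≠ 0) (hx2 : ‖x‖ ≤ 2) : ‖tilde x‖ = 2 - ‖x‖ := by
  rw [tilde_eq_smul, norm_smul, Real.norm_eq_abs, abs_of_nonneg (by positivity),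
    div_mul_cancel₀ _ (norm_ne_zero_iff.2 hx)]

theorem norm_sub_tilde_sq {x : ℂ} (hx : x ≠ 0) (y : ℂ) :
    ‖y - tilde x‖ ^ 2 =
      ‖x - y‖ ^ 2 + 4 * (1 - ‖x‖) * (1 - ‖y‖) + 4 * (1 - ‖x‖) / ‖x‖ * (‖x‖ * ‖y‖ - ⟪x, y⟫) := by
  rw [tilde_eq_smul, norm_sub_smul_sq_eq hx]

theorem pB_comm (x y : ℂ) : pB x y = pB y x := by
  rw [pB, pB, norm_sub_rev, mul_right_comm]

theorem wB_comm (x y : ℂ) : wB x y = wB y x := by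
  unfold wB
  by_cases hx : x = 0 <;> by_cases hy : y = 0 <;> simp [hx, hy, norm_sub_rev x y, min_comm]

theorem norm_sub_tilde_le_of_norm_le {x y : ℂ} (hy : y ≠ 0) (hyx : ‖y‖ ≤ ‖x‖) :
    ‖y - tilde x‖ ≤ ‖x - tilde y‖ := by
  have hx : x ≠ 0 := norm_pos_iff.1 ((norm_pos_iff.2 hy).trans_le hyx)
  have hu : 0 ≤ ‖x‖ * ‖y‖ - ⟪x, y⟫ := sub_nonneg.2 (real_inner_le_norm x y)
  have hcoef : 4 * (1 - ‖x‖) / ‖x‖ ≤ 4 * (1 - ‖y‖) / ‖y‖ := by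
    rw [div_le_div_iff₀ (norm_pos_iff.2 hx) (norm_pos_iff.2 hy)]
    nlinarith
  rw [← sq_le_sq₀ (norm_nonneg _) (norm_nonneg _), norm_sub_tilde_sq hx,
    norm_sub_tilde_sq hy, norm_sub_rev y, real_inner_comm x y]
  linarith [mul_le_mul_of_nonneg_right hcoef hu]

theorem wB_eq_of_norm_le {x y : ℂ} (hx : x ≠ 0) (hx2 : ‖x‖ ≤ 2) (hyx : ‖y‖ ≤ ‖x‖) :
    wB x y = ‖x - y‖ / ‖y - tilde x‖ := by
  rw [wB, if_neg hx]
  split_ifs with hy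
  · rw [hy, sub_zero, zero_sub, norm_neg, norm_tilde hx hx2]
  · rw [min_eq_right (norm_sub_tilde_le_of_norm_le hy hyx)]

theorem sqrt_le_norm_sub_tilde {x : ℂ} (hx : x ≠ 0) (hx1 : ‖x‖ ≤ 1) (y : ℂ) :
    √(‖x - y‖ ^ 2 + 4 * (1 - ‖x‖) * (1 - ‖y‖)) ≤ ‖y - tilde x‖ := by
  have hu : 0 ≤ ‖x‖ * ‖y‖ - ⟪x, y⟫ := sub_nonneg.2 (real_inner_le_norm x y)
  rw [Real.sqrt_le_left (norm_nonneg _), norm_sub_tilde_sq hx]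
  have : 0 ≤ 4 * (1 - ‖x‖) / ‖x‖ * (‖x‖ * ‖y‖ - ⟪x, y⟫) := by
    have := sub_nonneg.2 hx1
    positivity
  linarith

theorem norm_sub_tilde_le_sqrt_two_mul_sqrt {x y : ℂ} (hx : x ≠ 0) (hx1 : ‖x‖ < 1)
    (hyx : ‖y‖ ≤ ‖x‖) :
    ‖y - tilde x‖ ≤ √2 * √(‖x - y‖ ^ 2 + 4 * (1 - ‖x‖) * (1 - ‖y‖)) := by
  set A := ‖x‖
  set B := ‖y‖
  set u := A * B - ⟪x, y⟫
  have hA : 0 < A := norm_pos_iff.2 hx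
  have hu : 0 ≤ u := sub_nonneg.2 (real_inner_le_norm x y)
  have hu2 : u ≤ 2 * (A * B) := by linarith [neg_le_of_abs_le (abs_real_inner_le_norm x y)]
  have key : (4 - 6 * A) * u ≤ A * (2 - A - B) ^ 2 := by
    rcases le_or_gt (2 - 3 * A) 0 with h | h
    · nlinarith
    · -- `(2-A-B)² - 4B(2-3A) = 4(2A-1)² + (A-B)(12-15A-B)`
      have hs : 4 * B * (2 - 3 * A) ≤ (2 - A - B) ^ 2 := by
        nlinarith [mul_nonneg (sub_nonneg.2 hyx) (by linarith : (0 : ℝ) ≤ 12 - 15 * A - B),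
          sq_nonneg (2 * A - 1)]
      nlinarith
  have hextra : 4 * (1 - A) / A * u ≤ (2 - A - B) ^ 2 + 2 * u := by
    rw [div_mul_eq_mul_div, div_le_iff₀ hA]
    linarith
  rw [← Real.sqrt_mul zero_le_two]
  refine (le_abs_self _).trans (Real.abs_le_sqrt ?_)
  rw [norm_sub_tilde_sq hx, norm_sub_sq_add_four_mul_eq]
  linarith

theorem wB_le_pB_le_sqrt_two_mul_wB_of_norm_le {x y : ℂ} (hx : x ≠ 0) (hx1 : ‖x‖ < 1)
    (hy1 : ‖y‖ < 1) (hyx : ‖y‖ ≤ ‖x‖) :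
    wB x y ≤ pB x y ∧ pB x y ≤ √2 * wB x y := by
  have hS := Real.sqrt_pos.2 (norm_sub_sq_add_four_mul_pos hx1 hy1)
  have hlow := sqrt_le_norm_sub_tilde hx hx1.le y
  rw [wB_eq_of_norm_le hx (by linarith) hyx, pB]
  refine ⟨div_le_div_of_nonneg_left (norm_nonneg _) hS hlow, ?_⟩
  calc ‖x - y‖ / √(‖x - y‖ ^ 2 + 4 * (1 - ‖x‖) * (1 - ‖y‖))
      = √2 * ‖x - y‖ / (√2 * √(‖x - y‖ ^ 2 + 4 * (1 - ‖x‖) * (1 - ‖y‖))) := by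
        rw [mul_div_mul_left _ _ (by positivity)]
    _ ≤ √2 * ‖x - y‖ / ‖y - tilde x‖ := div_le_div_of_nonneg_left (by positivity)
        (hS.trans_le hlow) (norm_sub_tilde_le_sqrt_two_mul_sqrt hx hx1 hyx)
    _ = √2 * (‖x - y‖ / ‖y - tilde x‖) := mul_div_assoc _ _ _

theorem norm_sub_tilde_eq_sqrt_of_sameRay {x y : ℂ} (hx : x ≠ 0) (hxy : SameRay ℝ x y) :
    ‖y - tilde x‖ = √(‖x - y‖ ^ 2 + 4 * (1 - ‖x‖) * (1 - ‖y‖)) := by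
  rw [← Real.sqrt_sq (norm_nonneg (y - tilde x)), norm_sub_tilde_sq hx,
    inner_eq_norm_mul_iff_real.2 hxy.norm_smul_eq.symm, sub_self, mul_zero, add_zero]

theorem norm_neg_sub_tilde_eq_sqrt_two_mul_sqrt {x : ℂ} (hx : ‖x‖ = 1 / 2) :
    ‖-x - tilde x‖ = √2 * √(‖x - -x‖ ^ 2 + 4 * (1 - ‖x‖) * (1 - ‖-x‖)) := by
  have hx0 : x ≠ 0 := norm_ne_zero_iff.1 (by rw [hx]; norm_num)
  rw [← Real.sqrt_mul zero_le_two, ← Real.sqrt_sq (norm_nonneg (-x - tilde x)),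
    norm_sub_tilde_sq hx0, norm_sub_sq_add_four_mul_eq, inner_neg_right,
    real_inner_self_eq_norm_sq, norm_neg, hx]
  norm_num

/-- For all `x, y ∈ B²`, `w ≤ p ≤ √2 w`; equality `w = p` holds when `x, y` lie on the
same ray from the origin, and `p = √2 w` holds when `x = −y` with `|x| = 1/2`. -/
theorem w_le_p_le_sqrt_two_w :
    (∀ x y : ℂ, x ∈ Metric.ball (0 : ℂ) 1 → y ∈ Metric.ball (0 : ℂ) 1 →
      wB x y ≤ pB x y ∧ pB x y ≤ Real.sqrt 2 * wB x y) ∧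
    (∀ x y : ℂ, x ∈ Metric.ball (0 : ℂ) 1 → y ∈ Metric.ball (0 : ℂ) 1 →
      SameRay ℝ x y → wB x y = pB x y) ∧
    (∀ x : ℂ, norm x = 1/2 → pB x (-x) = Real.sqrt 2 * wB x (-x)) := by
  refine ⟨fun x y hx hy => ?_, fun x y hx hy hxy => ?_, fun x hx => ?_⟩
  · wlog hyx : ‖y‖ ≤ ‖x‖ generalizing x y
    · rw [wB_comm, pB_comm]
      exact this y x hy hx (le_of_not_ge hyx)
    rw [mem_ball_zero_iff] at hx hy
    rcases eq_or_ne x 0 with rfl | hx0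
    · simp [norm_le_zero_iff.1 (hyx.trans_eq norm_zero), wB, pB]
    exact wB_le_pB_le_sqrt_two_mul_wB_of_norm_le hx0 hx hy hyx
  · wlog hyx : ‖y‖ ≤ ‖x‖ generalizing x y
    · rw [wB_comm, pB_comm]
      exact this y x hy hx hxy.symm (le_of_not_ge hyx)
    rw [mem_ball_zero_iff] at hx
    rcases eq_or_ne x 0 with rfl | hx0
    · simp [norm_le_zero_iff.1 (hyx.trans_eq norm_zero), wB, pB]
    rw [wB_eq_of_norm_le hx0 (by linarith) hyx, pB, norm_sub_tilde_eq_sqrt_of_sameRay hx0 hxy]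
  · have hx0 : x ≠ 0 := norm_ne_zero_iff.1 (by rw [hx]; norm_num)
    rw [wB_eq_of_norm_le hx0 (by rw [hx]; norm_num) (norm_neg x).le, pB,
      norm_neg_sub_tilde_eq_sqrt_two_mul_sqrt hx]
    field_simp
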